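/- For α, a, b ∈ ℝ with a ∈ ℕ even (so that v^a is smooth on all of ℝ) and m > 0, the function η(v,m) = v^a m^b satisfies the entropy PDE (α v²/(2 m^{α+1})) η_vv - (1/m^{α-1}) η_mm + ((2-α) v / m^α) η_vm = 0 if and only if α a(-a + 2b + 1) + 2b(-2a + b - 1) = 0. -/
import Mathlib

noncomputable def pdv (f : ℝ → ℝ → ℝ) (v m : ℝ) : ℝ := deriv (fun x => f x m) v

noncomputable def pdm (f : ℝ → ℝ → ℝ) (v m : ℝ) : ℝ := deriv (fun y => f v y) m

section aux
variable (α b : ℝ) (a : ℕ)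

lemma pdv_eta (v m : ℝ) :
    pdv (fun v m => v ^ a * m ^ b) v m = a * v ^ (a - 1) * m ^ b := by
  unfold pdv
  exact (((hasDerivAt_pow a v).mul_const (m ^ b))).deriv

lemma pdvv_eta (v m : ℝ) :
    pdv (pdv (fun v m => v ^ a * m ^ b)) v m
      = (a : ℝ) * ((a - 1 : ℕ) : ℝ) * v ^ (a - 1 - 1) * m ^ b := by
  unfold pdv
  have : (fun x => deriv (fun x => x ^ a * m ^ b) x)
      = fun x => (a : ℝ) * x ^ (a - 1) * m ^ b := by
    funext x
    exact (((hasDerivAt_pow a x).mul_const (m ^ b))).deriv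
  rw [this]
  have h : HasDerivAt (fun x : ℝ => (a : ℝ) * x ^ (a - 1) * m ^ b)
      ((a : ℝ) * (((a - 1 : ℕ) : ℝ) * v ^ (a - 1 - 1)) * m ^ b) v :=
    (((hasDerivAt_pow (a - 1) v).const_mul (a : ℝ)).mul_const (m ^ b))
  rw [h.deriv]; ring

lemma pdm_eta (v m : ℝ) (hm : 0 < m) :
    pdm (fun v m => v ^ a * m ^ b) v m = v ^ a * (b * m ^ (b - 1)) := by
  unfold pdm
  exact ((Real.hasDerivAt_rpow_const (Or.inl hm.ne')).const_mul (v ^ a)).deriv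

lemma pdmv_eta (v m : ℝ) (hm : 0 < m) :
    pdm (pdv (fun v m => v ^ a * m ^ b)) v m
      = (a : ℝ) * v ^ (a - 1) * (b * m ^ (b - 1)) := by
  unfold pdm
  have : (fun y => pdv (fun v m => v ^ a * m ^ b) v y)
      = fun y => (a : ℝ) * v ^ (a - 1) * y ^ b := by
    funext y; exact pdv_eta b a v y
  rw [this]
  exact ((Real.hasDerivAt_rpow_const (Or.inl hm.ne')).const_mul
    ((a : ℝ) * v ^ (a - 1))).deriv

lemma pdmm_eta (v m : ℝ) (hm : 0 < m) :
    pdm (pdm (fun v m => v ^ a * m ^ b)) v m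
      = v ^ a * (b * ((b - 1) * m ^ (b - 1 - 1))) := by
  have hev : (fun y => pdm (fun v m => v ^ a * m ^ b) v y)
      =ᶠ[nhds m] fun y => v ^ a * (b * y ^ (b - 1)) := by
    filter_upwards [Ioi_mem_nhds hm] with y hy
    exact pdm_eta b a v y hy
  rw [show pdm (pdm (fun v m => v ^ a * m ^ b)) v m
      = deriv (fun y => pdm (fun v m => v ^ a * m ^ b) v y) m from rfl, hev.deriv_eq]
  have h : HasDerivAt (fun y : ℝ => v ^ a * (b * y ^ (b - 1)))
      (v ^ a * (b * ((b - 1) * m ^ (b - 1 - 1)))) m :=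
    (((Real.hasDerivAt_rpow_const (Or.inl hm.ne')).const_mul b).const_mul (v ^ a))
  exact h.deriv

end aux

/-- η(v,m) = v^a m^b (a ∈ ℕ even, m > 0) satisfies the entropy PDE
if and only if α a(-a + 2b + 1) + 2b(-2a + b - 1) = 0. -/
theorem power_entropy_iff (α b : ℝ) (a : ℕ) (ha : Even a) :
    (∀ v m : ℝ, 0 < m →
        (α * v ^ 2 / (2 * m ^ (α + 1)))
            * pdv (pdv (fun v m => v ^ a * m ^ b)) v m
          - (1 / m ^ (α - 1)) * pdm (pdm (fun v m => v ^ a * m ^ b)) v m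
          + ((2 - α) * v / m ^ α) * pdm (pdv (fun v m => v ^ a * m ^ b)) v m = 0)
    ↔ α * (a : ℝ) * (-(a : ℝ) + 2 * b + 1) + 2 * b * (-2 * (a : ℝ) + b - 1) = 0 := by
  constructor
  · intro h
    have h1 := h 1 1 one_pos
    rw [pdvv_eta, pdmm_eta b a 1 1 one_pos, pdmv_eta b a 1 1 one_pos] at h1
    simp only [one_pow, Real.one_rpow, mul_one, one_mul, div_one, mul_one] at h1
    rcases Nat.eq_zero_or_pos a with h0 | hpos
    · subst h0
      push_cast at h1 ⊢
      nlinarith [h1]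
    · have hc : ((a - 1 : ℕ) : ℝ) = (a : ℝ) - 1 := by
        rw [Nat.cast_sub hpos]; simp
      rw [hc] at h1
      linear_combination (-2 : ℝ) * h1
  · intro h v m hm
    rw [pdvv_eta, pdmm_eta b a v m hm, pdmv_eta b a v m hm]
    have e1 : m ^ (α + 1) = m ^ α * m := by
      rw [Real.rpow_add hm, Real.rpow_one]
    have e2 : 1 / m ^ (α - 1) = m / m ^ α := by
      rw [Real.rpow_sub hm, Real.rpow_one]
      rw [one_div, inv_div]
    have e3 : m ^ (b - 1) = m ^ b / m := by
      rw [Real.rpow_sub hm, Real.rpow_one]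
    have e4 : m ^ (b - 1 - 1) = m ^ b / m / m := by
      rw [Real.rpow_sub hm, Real.rpow_sub hm, Real.rpow_one]
    rw [e1, e2, e3, e4]
    have hm0 : m ≠ 0 := hm.ne'
    have hmm : m * m⁻¹ = 1 := mul_inv_cancel₀ hm.ne'
    have hA : m ^ α ≠ 0 := (Real.rpow_pos_of_pos hm α).ne'
    rcases Nat.eq_zero_or_pos a with h0 | hpos
    · subst h0
      push_cast at h ⊢
      simp only [pow_zero, Nat.zero_sub] at *
      linear_combination (-(m ^ b / m / m) * m / (2 * m ^ α)) * h
    · have h2 : 2 ≤ a := by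
        have : a ≠ 1 := by rintro rfl; exact (by decide : ¬ Even 1) ha
        omega
      have hc : ((a - 1 : ℕ) : ℝ) = (a : ℝ) - 1 := by
        rw [Nat.cast_sub hpos]; simp
      rw [hc]
      have hv : v ^ 2 * v ^ (a - 1 - 1) = v ^ a := by
        rw [← pow_add]; congr 1; omega
      have hv2 : v * v ^ (a - 1) = v ^ a := by
        rw [← pow_succ']; congr 1; omega
      linear_combination (-(v ^ a * m ^ b) / (2 * m ^ α * m)) * h
        + (α * (a : ℝ) * ((a : ℝ) - 1) * m ^ b / (2 * m ^ α * m)) * hv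
        + ((2 - α) * (a : ℝ) * b * m ^ b / (m ^ α * m)) * hv2
        + (v ^ a * (m ^ α)⁻¹ * m⁻¹ * m ^ b * (b - b ^ 2)) * hmm
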